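/- For every odd positive integer m and every nonnegative integer n, 2^{n-1}(E_{n,\lambda}(m) + E_{n,\lambda}) = \sum_{l=0}^{m-1} (-1)^l (2l+1)_{n,2\lambda}, where E_{n,\lambda}(x) are the degenerate type 2 Euler polynomials and (x)_{n,\mu} the generalized falling factorial. -/

import Mathlib

open PowerSeries Finset

/-- Generalized falling factorial (x)_{n,λ} = x(x-λ)(x-2λ)⋯(x-(n-1)λ), with (x)_{0,λ} = 1. -/
def degFall (lam x : ℝ) : ℕ → ℝ
  | 0 => 1
  | k + 1 => degFall lam x k * (x - (k : ℝ) * lam)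

/-- The degenerate exponential e_λ^x(t) = (1+λt)^{x/λ} = ∑_k (x)_{k,λ} t^k/k!,
as a formal power series. -/
noncomputable def degExp (lam x : ℝ) : PowerSeries ℝ :=
  PowerSeries.mk fun k => degFall lam x k / (k.factorial : ℝ)

lemma degFall_vandermonde (lam x y : ℝ) (n : ℕ) :
    degFall lam (x + y) n
      = ∑ k ∈ range (n + 1),
          (n.choose k : ℝ) * degFall lam x k * degFall lam y (n - k) := by
  induction n with
  | zero => simp [degFall]
  | succ n ih =>
    have step : ∀ k ∈ range (n + 1),
        (n.choose k : ℝ) * degFall lam x k * degFall lam y (n - k) * (x + y - (n : ℝ) * lam)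
          = (n.choose k : ℝ) * degFall lam x (k + 1) * degFall lam y (n - k)
            + (n.choose k : ℝ) * degFall lam x k * degFall lam y ((n - k) + 1) := by
      intro k hk
      have hk' : k ≤ n := Nat.lt_succ_iff.mp (mem_range.mp hk)
      have hc : ((n - k : ℕ) : ℝ) = (n : ℝ) - k := by
        push_cast [Nat.cast_sub hk']; ring
      rw [degFall, degFall, hc]
      ring
    rw [show degFall lam (x + y) (n + 1)
          = degFall lam (x + y) n * (x + y - (n : ℝ) * lam) from rfl,
        ih, Finset.sum_mul, Finset.sum_congr rfl step, Finset.sum_add_distrib]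
    conv_rhs => rw [Finset.sum_range_succ']
    have hre : ∀ i ∈ range (n + 1),
        (((n + 1).choose (i + 1) : ℕ) : ℝ) * degFall lam x (i + 1)
            * degFall lam y (n + 1 - (i + 1))
          = (n.choose i : ℝ) * degFall lam x (i + 1) * degFall lam y (n - i)
            + (n.choose (i + 1) : ℝ) * degFall lam x (i + 1) * degFall lam y (n - i) := by
      intro i _
      have : n + 1 - (i + 1) = n - i := by omega
      rw [this, Nat.choose_succ_succ]
      push_cast
      ring
    have h0 : (((n + 1).choose 0 : ℕ) : ℝ) * degFall lam x 0 * degFall lam y (n + 1 - 0)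
        = degFall lam y (n + 1) := by simp [degFall]
    have key : ∑ k ∈ range (n + 1),
          (n.choose k : ℝ) * degFall lam x k * degFall lam y ((n - k) + 1)
        = (∑ i ∈ range (n + 1),
            (n.choose (i + 1) : ℝ) * degFall lam x (i + 1) * degFall lam y (n - i))
          + degFall lam y (n + 1) := by
      rw [Finset.sum_range_succ' (fun k =>
        (n.choose k : ℝ) * degFall lam x k * degFall lam y (n - k + 1))]
      rw [Finset.sum_range_succ (fun i =>
        (n.choose (i + 1) : ℝ) * degFall lam x (i + 1) * degFall lam y (n - i))]
      simp only [Nat.choose_succ_self, Nat.cast_zero, zero_mul, add_zero,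
        Nat.choose_zero_right, Nat.cast_one, Nat.sub_zero]
      congr 1
      · refine Finset.sum_congr rfl fun i hi => ?_
        have : n - (i + 1) + 1 = n - i := by
          have := mem_range.mp hi; omega
        rw [this]
      · simp [degFall]
    rw [Finset.sum_congr rfl hre, Finset.sum_add_distrib, h0, key]
    ring

lemma degExp_mul (lam x y : ℝ) :
    degExp lam x * degExp lam y = degExp lam (x + y) := by
  ext n
  rw [coeff_mul, Finset.Nat.sum_antidiagonal_eq_sum_range_succ_mk]
  simp only [degExp, coeff_mk]
  rw [degFall_vandermonde, Finset.sum_div]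
  refine Finset.sum_congr rfl fun k hk => ?_
  have hk' : k ≤ n := Nat.lt_succ_iff.mp (mem_range.mp hk)
  have h := Nat.choose_mul_factorial_mul_factorial hk'
  have h1 : (k.factorial : ℝ) ≠ 0 := Nat.cast_ne_zero.mpr k.factorial_ne_zero
  have h2 : ((n - k).factorial : ℝ) ≠ 0 := Nat.cast_ne_zero.mpr (n - k).factorial_ne_zero
  have h3 : (n.factorial : ℝ) ≠ 0 := Nat.cast_ne_zero.mpr n.factorial_ne_zero
  rw [div_mul_div_comm, div_eq_div_iff (by positivity) h3]
  have hcast : ((n.choose k : ℕ) : ℝ) * (k.factorial : ℝ) * ((n - k).factorial : ℝ)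
      = (n.factorial : ℝ) := by exact_mod_cast congrArg (Nat.cast : ℕ → ℝ) h
  linear_combination (-1 : ℝ) * degFall lam x k * degFall lam y (n - k) * hcast

lemma degFall_double (lam x : ℝ) (n : ℕ) :
    degFall (2 * lam) (2 * x) n = 2 ^ n * degFall lam x n := by
  induction n with
  | zero => simp [degFall]
  | succ n ih => rw [degFall, degFall, ih]; ring

/-- for odd positive m,
2^{n-1}(E_{n,λ}(m) + E_{n,λ}) = ∑_{l=0}^{m-1} (-1)^l (2l+1)_{n,2λ}. -/
theorem degenerate_type2_euler_alternating_sum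
    (lam : ℝ) (hlam : lam ≠ 0)
    (Ed : ℕ → ℝ → ℝ)
    (hEd : ∀ x : ℝ,
      (PowerSeries.mk fun n => Ed n x / (n.factorial : ℝ)) *
        (degExp lam (1/2) + degExp lam (-(1/2)))
        = 2 * degExp lam x)
    (m : ℕ) (hm : 0 < m) (hodd : Odd m) (n : ℕ) :
    (2 : ℝ) ^ ((n : ℤ) - 1) * (Ed n (m : ℝ) + Ed n 0)
      = ∑ l ∈ range m, (-1 : ℝ) ^ l * degFall (2 * lam) (2 * (l : ℝ) + 1) n := by
  classical
  set S : PowerSeries ℝ := degExp lam (1/2) + degExp lam (-(1/2)) with hS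
  have hS0 : (PowerSeries.coeff 0) S = 2 := by
    simp [hS, degExp, degFall]
    norm_num
  have hSne : S ≠ 0 := by
    intro h; rw [h] at hS0; simp at hS0
  set T : PowerSeries ℝ :=
    ∑ l ∈ range m, ((-1 : ℝ) ^ l) • degExp lam ((l : ℝ) + 1/2) with hT
  set f : ℕ → PowerSeries ℝ :=
    fun j => -(((-1 : ℝ) ^ j) • degExp lam (j : ℝ)) with hf
  have hST : S * T = degExp lam (m : ℝ) + degExp lam 0 := by
    have hterm : ∀ l : ℕ, S * (((-1 : ℝ) ^ l) • degExp lam ((l : ℝ) + 1/2))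
        = f (l + 1) - f l := by
      intro l
      have e1 : degExp lam (1/2) * degExp lam ((l : ℝ) + 1/2)
          = degExp lam ((l : ℝ) + 1) := by
        rw [degExp_mul, show (1/2 : ℝ) + ((l : ℝ) + 1/2) = (l : ℝ) + 1 by ring]
      have e2 : degExp lam (-(1/2)) * degExp lam ((l : ℝ) + 1/2)
          = degExp lam (l : ℝ) := by
        rw [degExp_mul, show (-(1/2) : ℝ) + ((l : ℝ) + 1/2) = (l : ℝ) by ring]
      rw [hf, mul_smul_comm, hS, add_mul, e1, e2]
      simp only [Nat.cast_succ, pow_succ]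
      rw [smul_add]
      push_cast
      module
    rw [hT, Finset.mul_sum, Finset.sum_congr rfl (fun l _ => hterm l),
      Finset.sum_range_sub f]
    have hm1 : ((-1 : ℝ) ^ m) = -1 := hodd.neg_one_pow
    simp [hf, hm1, degExp]
  have hsum : ((PowerSeries.mk fun k => Ed k (m : ℝ) / (k.factorial : ℝ))
        + (PowerSeries.mk fun k => Ed k 0 / (k.factorial : ℝ))) * S
      = (2 * T) * S := by
    rw [add_mul, hEd (m : ℝ), hEd 0,
      show (2 * T) * S = 2 * (S * T) by ring, hST]
    ring
  have heq : (PowerSeries.mk fun k => Ed k (m : ℝ) / (k.factorial : ℝ))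
        + (PowerSeries.mk fun k => Ed k 0 / (k.factorial : ℝ)) = 2 * T :=
    mul_right_cancel₀ hSne hsum
  have hco := congrArg (PowerSeries.coeff n) heq
  have h2C : (2 : PowerSeries ℝ) = PowerSeries.C 2 := (map_ofNat (PowerSeries.C) 2).symm
  rw [map_add, coeff_mk, coeff_mk, h2C, PowerSeries.coeff_C_mul, hT, map_sum] at hco
  simp only [LinearMap.map_smul, degExp, coeff_mk, smul_eq_mul] at hco
  have hnf : ((n.factorial : ℝ)) ≠ 0 := Nat.cast_ne_zero.mpr n.factorial_ne_zero
  have hco2 : Ed n (m : ℝ) + Ed n 0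
      = 2 * ∑ l ∈ range m, (-1 : ℝ) ^ l * degFall lam ((l : ℝ) + 1/2) n := by
    have expand : ∑ l ∈ range m,
          (-1 : ℝ) ^ l * (degFall lam ((l : ℝ) + 1/2) n / (n.factorial : ℝ))
        = (∑ l ∈ range m, (-1 : ℝ) ^ l * degFall lam ((l : ℝ) + 1/2) n)
            / (n.factorial : ℝ) := by
      rw [Finset.sum_div]
      exact Finset.sum_congr rfl fun l _ => by ring
    rw [expand, ← add_div, div_eq_iff hnf, mul_assoc,
      div_mul_cancel₀ _ hnf] at hco
    exact hco
  have hz : (2 : ℝ) ^ ((n : ℤ) - 1) = 2 ^ n / 2 := by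
    rw [zpow_sub₀ (two_ne_zero), zpow_natCast, zpow_one]
  rw [hz, hco2, Finset.mul_sum, Finset.mul_sum]
  refine Finset.sum_congr rfl fun l _ => ?_
  have hd : degFall (2 * lam) (2 * (l : ℝ) + 1) n
      = 2 ^ n * degFall lam ((l : ℝ) + 1/2) n := by
    rw [show (2 * (l : ℝ) + 1) = 2 * ((l : ℝ) + 1/2) by ring, degFall_double]
  rw [hd]
  ring
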